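/- arXiv:1901.11294 — 4 statements merged into one kernel-verified Lean document; each statement's English description precedes it below -/
import Mathlib

section
/- For every integer n ≥ 1 there exist constants c₂ ≥ c₁ > 0 and B₀ ≥ 2 such that for every real B ≥ B₀, the number of n-tuples (x⁽¹⁾, …, x⁽ⁿ⁾) of primitive vectors in ℤ³ satisfying ∏_{j=1}^n ‖x⁽ʲ⁾‖∞³ ≤ B is at least c₁·B·(log B)^{n−1} and at most c₂·B·(log B)^{n−1}. -/
noncomputable section

/-- A vector of integers is primitive if the gcd of its coordinates is `1`. -/
def IsPrimitiveVec {k : ℕ} (x : Fin k → ℤ) : Prop := Finset.gcd Finset.univ x = 1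

/-- The sup-norm `max_i |x_i|` of an integer vector. -/
def supNorm {k : ℕ} (x : Fin k → ℤ) : ℕ := Finset.univ.sup fun i => (x i).natAbs

/-!
Splitting off the first vector gives the recursion `N_{n+1}(B) = ∑_v N_n(B / ‖v‖³)` over primitive
`v ∈ ℤ³`, so by induction on `n` everything reduces to the number of primitive vectors of sup-norm
exactly `m`. It lies between `m² / 12` (the vectors `(a, b, m)` with `a, b ≤ m` coprime) and `26 m²`
(a shell of the cube), hence `∑_{‖v‖ ≤ T} ‖v‖⁻³` is comparable to the harmonic sum, i.e. to `log T`,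
and each step of the induction gains a factor `log B`. For the lower bound only the `v` with
`‖v‖⁶ ≤ B` are kept: for them `B / ‖v‖³ ≥ √B`, so `log (B / ‖v‖³) ≥ log B / 2`.
-/

open Finset

instance {k : ℕ} : DecidablePred (@IsPrimitiveVec k) :=
  fun x => inferInstanceAs (Decidable (Finset.gcd Finset.univ x = 1))

section SupBall

variable {k : ℕ}

lemma supNorm_le_iff {x : Fin k → ℤ} {m : ℕ} : supNorm x ≤ m ↔ ∀ i, (x i).natAbs ≤ m := by
  simp [supNorm]

lemma natAbs_le_supNorm (x : Fin k → ℤ) (i : Fin k) : (x i).natAbs ≤ supNorm x :=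
  le_sup (f := fun i => (x i).natAbs) (mem_univ i)

lemma isPrimitiveVec_of_isCoprime {x : Fin k → ℤ} {i j : Fin k} (h : IsCoprime (x i) (x j)) :
    IsPrimitiveVec x := by
  have hunit := h.isUnit_of_dvd' (gcd_dvd (mem_univ i)) (gcd_dvd (mem_univ j))
  rw [IsPrimitiveVec, ← normalize_eq_one.2 hunit, Finset.normalize_gcd]

lemma IsPrimitiveVec.one_le_supNorm {x : Fin k → ℤ} (hx : IsPrimitiveVec x) : 1 ≤ supNorm x := by
  by_contra! h
  have hzero : ∀ i, x i = 0 := fun i => by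
    simpa using supNorm_le_iff.1 (Nat.lt_one_iff.1 h).le i
  have : Finset.gcd univ x = 0 := gcd_eq_zero_iff.2 fun i _ => hzero i
  rw [IsPrimitiveVec, this] at hx
  exact zero_ne_one hx

variable (k) in
def supBall (m : ℕ) : Finset (Fin k → ℤ) := Fintype.piFinset fun _ => Icc (-(m : ℤ)) m

lemma mem_supBall {m : ℕ} {x : Fin k → ℤ} : x ∈ supBall k m ↔ supNorm x ≤ m := by
  simp only [supBall, Fintype.mem_piFinset, mem_Icc, supNorm_le_iff]
  exact forall_congr' fun i => by omega

lemma card_supBall (m : ℕ) : #(supBall k m) = (2 * m + 1) ^ k := by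
  simp only [supBall, Fintype.card_piFinset, Int.card_Icc, prod_const, card_univ, Fintype.card_fin]
  congr 1
  omega

variable (k) in
def primitiveBall (m : ℕ) : Finset (Fin k → ℤ) := {x ∈ supBall k m | IsPrimitiveVec x}

lemma mem_primitiveBall {m : ℕ} {x : Fin k → ℤ} :
    x ∈ primitiveBall k m ↔ supNorm x ≤ m ∧ IsPrimitiveVec x := by
  rw [primitiveBall, mem_filter, mem_supBall]

lemma primitiveBall_mono {a b : ℕ} (h : a ≤ b) : primitiveBall k a ⊆ primitiveBall k b :=
  filter_subset_filter _ fun _ hx => mem_supBall.2 ((mem_supBall.1 hx).trans h)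

end SupBall

lemma card_supNorm_eq_le (T : ℕ) {m : ℕ} (hm : 1 ≤ m) :
    #{v ∈ primitiveBall 3 T | supNorm v = m} ≤ 26 * m ^ 2 := by
  have hsub : {v ∈ primitiveBall 3 T | supNorm v = m} ⊆ supBall 3 m \ supBall 3 (m - 1) := by
    intro v hv
    rw [mem_filter] at hv
    rw [mem_sdiff, mem_supBall, mem_supBall]
    omega
  calc #{v ∈ primitiveBall 3 T | supNorm v = m}
      ≤ #(supBall 3 m \ supBall 3 (m - 1)) := card_le_card hsub
    _ = (2 * m + 1) ^ 3 - (2 * (m - 1) + 1) ^ 3 := by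
        rw [card_sdiff_of_subset fun v hv => mem_supBall.2 ((mem_supBall.1 hv).trans (by omega)),
          card_supBall, card_supBall]
    _ ≤ 26 * m ^ 2 := by
        obtain ⟨k, rfl⟩ := Nat.exists_eq_add_of_le' hm
        rw [Nat.add_sub_cancel, Nat.sub_le_iff_le_add]
        ring_nf
        nlinarith

def coprimePairs (t : ℕ) : Finset (ℕ × ℕ) := {p ∈ Icc 1 t ×ˢ Icc 1 t | Nat.Coprime p.1 p.2}

lemma sum_Icc_two_inv_sq_le (t : ℕ) : ∑ d ∈ Icc 2 t, ((d : ℝ) ^ 2)⁻¹ ≤ 11 / 12 := by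
  have hsub : Icc 2 t ⊆ insert 2 (Ioo 2 (t + 1)) := fun d hd => by
    simp only [mem_Icc, mem_insert, mem_Ioo] at hd ⊢
    omega
  calc ∑ d ∈ Icc 2 t, ((d : ℝ) ^ 2)⁻¹
      ≤ ∑ d ∈ insert 2 (Ioo 2 (t + 1)), ((d : ℝ) ^ 2)⁻¹ :=
        sum_le_sum_of_subset_of_nonneg hsub fun _ _ _ => by positivity
    _ ≤ ((2 : ℝ) ^ 2)⁻¹ + 2 / (2 + 1) := by
        rw [sum_insert (by simp)]
        have := sum_Ioo_inv_sq_le (α := ℝ) 2 (t + 1)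
        push_cast at this ⊢
        linarith
    _ = 11 / 12 := by norm_num

/-- A non-coprime pair in `[1, t]²` has a common divisor `d ∈ [2, t]`, and there are
`⌊t / d⌋²` pairs with common divisor `d`. -/
lemma card_coprimePairs_ge (t : ℕ) : (t : ℝ) ^ 2 / 12 ≤ #(coprimePairs t) := by
  set S := Icc 1 t ×ˢ Icc 1 t
  have hmult : ∀ d, #{a ∈ Icc 1 t | d ∣ a} = t / d := fun d => by
    rw [← Nat.Ioc_filter_dvd_card_eq_div]; rfl
  have hsub : {p ∈ S | ¬ Nat.Coprime p.1 p.2} ⊆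
      (Icc 2 t).biUnion fun d => {a ∈ Icc 1 t | d ∣ a} ×ˢ {a ∈ Icc 1 t | d ∣ a} := by
    intro p hp
    simp only [S, mem_filter, mem_product, mem_Icc] at hp
    obtain ⟨⟨⟨h1, h1'⟩, h2, h2'⟩, hcop⟩ := hp
    have hg : 2 ≤ Nat.gcd p.1 p.2 := by
      have := Nat.gcd_pos_of_pos_left p.2 h1
      rw [Nat.Coprime] at hcop
      omega
    simp only [mem_biUnion, mem_product, mem_filter, mem_Icc]
    exact ⟨_, ⟨hg, (Nat.gcd_le_left _ h1).trans h1'⟩, ⟨⟨h1, h1'⟩, Nat.gcd_dvd_left _ _⟩,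
      ⟨h2, h2'⟩, Nat.gcd_dvd_right _ _⟩
  have hbad : (#{p ∈ S | ¬ Nat.Coprime p.1 p.2} : ℝ) ≤ 11 / 12 * t ^ 2 := by
    calc (#{p ∈ S | ¬ Nat.Coprime p.1 p.2} : ℝ)
        ≤ ∑ d ∈ Icc 2 t, ((t / d : ℕ) : ℝ) ^ 2 := by
          have := (card_le_card hsub).trans card_biUnion_le
          simp only [card_product, hmult] at this
          exact_mod_cast this.trans_eq (by simp [sq])
      _ ≤ ∑ d ∈ Icc 2 t, (t : ℝ) ^ 2 * ((d : ℝ) ^ 2)⁻¹ := by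
          gcongr with d hd
          rw [← div_eq_mul_inv, ← div_pow]
          gcongr
          exact Nat.cast_div_le
      _ ≤ 11 / 12 * t ^ 2 := by
          rw [← mul_sum, mul_comm]
          gcongr
          exact sum_Icc_two_inv_sq_le t
  have htotal : (#(coprimePairs t) : ℝ) + #{p ∈ S | ¬ Nat.Coprime p.1 p.2} = t ^ 2 := by
    rw [coprimePairs, ← Nat.cast_add, card_filter_add_card_filter_not]
    simp [sq]
  linarith

lemma supNorm_vec_eq {a b m : ℕ} (ha : a ≤ m) (hb : b ≤ m) :
    supNorm ![(a : ℤ), b, m] = m := by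
  refine le_antisymm (supNorm_le_iff.2 fun i => ?_) ?_
  · fin_cases i <;> simp [ha, hb]
  · simpa using natAbs_le_supNorm ![(a : ℤ), b, m] 2

lemma card_supNorm_eq_ge {T m : ℕ} (hmT : m ≤ T) :
    (m : ℝ) ^ 2 / 12 ≤ #{v ∈ primitiveBall 3 T | supNorm v = m} := by
  refine (card_coprimePairs_ge m).trans (Nat.cast_le.2 (card_le_card_of_injOn
    (fun p => ![(p.1 : ℤ), p.2, m]) (fun p hp => ?_) fun p _ q _ h => ?_))
  · simp only [coprimePairs, mem_coe, mem_filter, mem_product, mem_Icc] at hp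
    have hnorm := supNorm_vec_eq hp.1.1.2 hp.1.2.2
    rw [mem_coe, mem_filter, mem_primitiveBall, hnorm]
    refine ⟨⟨hmT, isPrimitiveVec_of_isCoprime (i := 0) (j := 1) ?_⟩, rfl⟩
    exact Int.isCoprime_iff_gcd_eq_one.2 (by simpa using hp.2)
  · have h0 := congrFun h 0
    have h1 := congrFun h 1
    simp only [Matrix.cons_val_zero, Matrix.cons_val_one, Nat.cast_inj] at h0 h1
    exact Prod.ext h0 h1

lemma sum_primitiveBall_eq (T : ℕ) (f : ℕ → ℝ) :
    ∑ v ∈ primitiveBall 3 T, f (supNorm v) =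
      ∑ m ∈ Icc 1 T, #{v ∈ primitiveBall 3 T | supNorm v = m} * f m := by
  rw [← sum_fiberwise_of_maps_to' (t := Icc 1 T) (g := supNorm) fun v hv => ?_]
  · simp only [sum_const, nsmul_eq_mul]
  · obtain ⟨hT, hprim⟩ := mem_primitiveBall.1 hv
    exact mem_Icc.2 ⟨hprim.one_le_supNorm, hT⟩

lemma sum_primitiveBall_le (T : ℕ) {f : ℕ → ℝ} (hf : ∀ m, 0 ≤ f m) :
    ∑ v ∈ primitiveBall 3 T, f (supNorm v) ≤ 26 * ∑ m ∈ Icc 1 T, (m : ℝ) ^ 2 * f m := by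
  rw [sum_primitiveBall_eq, mul_sum]
  refine sum_le_sum fun m hm => ?_
  rw [← mul_assoc]
  exact mul_le_mul_of_nonneg_right
    (by exact_mod_cast card_supNorm_eq_le T (mem_Icc.1 hm).1) (hf m)

lemma sum_primitiveBall_ge (T : ℕ) {f : ℕ → ℝ} (hf : ∀ m, 0 ≤ f m) :
    ∑ m ∈ Icc 1 T, (m : ℝ) ^ 2 / 12 * f m ≤ ∑ v ∈ primitiveBall 3 T, f (supNorm v) := by
  rw [sum_primitiveBall_eq]
  gcongr with m hm
  · exact hf m
  exact card_supNorm_eq_ge (mem_Icc.1 hm).2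

lemma cube_le_three_mul_sum_sq (T : ℕ) : (T : ℝ) ^ 3 ≤ 3 * ∑ m ∈ Icc 1 T, (m : ℝ) ^ 2 := by
  induction T with
  | zero => simp
  | succ T ih =>
    rw [sum_Icc_succ_top (by omega)]
    push_cast
    nlinarith [T.cast_nonneg (α := ℝ)]

lemma card_primitiveBall_le (T : ℕ) : (#(primitiveBall 3 T) : ℝ) ≤ 26 * T ^ 3 := by
  have h := sum_primitiveBall_le T (f := fun _ => 1) fun _ => zero_le_one
  simp only [sum_const, nsmul_eq_mul, mul_one] at h
  refine h.trans (mul_le_mul_of_nonneg_left ?_ (by norm_num))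
  calc ∑ m ∈ Icc 1 T, (m : ℝ) ^ 2 ≤ ∑ _m ∈ Icc 1 T, (T : ℝ) ^ 2 :=
        sum_le_sum fun m hm => by gcongr; exact_mod_cast (mem_Icc.1 hm).2
    _ = T ^ 3 := by simp; ring

lemma card_primitiveBall_ge (T : ℕ) : (T : ℝ) ^ 3 / 36 ≤ #(primitiveBall 3 T) := by
  have h := sum_primitiveBall_ge T (f := fun _ => 1) fun _ => zero_le_one
  simp only [sum_const, nsmul_eq_mul, mul_one, ← sum_div] at h
  linarith [cube_le_three_mul_sum_sq T]

lemma sum_inv_supNorm_cube_le (T : ℕ) :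
    ∑ v ∈ primitiveBall 3 T, ((supNorm v : ℝ) ^ 3)⁻¹ ≤ 26 * (1 + Real.log T) := by
  refine (sum_primitiveBall_le T (f := fun m => ((m : ℝ) ^ 3)⁻¹) fun m => by positivity).trans ?_
  gcongr
  calc ∑ m ∈ Icc 1 T, (m : ℝ) ^ 2 * ((m : ℝ) ^ 3)⁻¹ = harmonic T := by
        rw [harmonic_eq_sum_Icc]
        push_cast
        refine sum_congr rfl fun m hm => ?_
        have : (m : ℝ) ≠ 0 := by have := (mem_Icc.1 hm).1; positivity
        field_simp
    _ ≤ 1 + Real.log T := harmonic_le_one_add_log T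

lemma log_le_sum_inv_supNorm_cube (T : ℕ) :
    Real.log (T + 1) / 12 ≤ ∑ v ∈ primitiveBall 3 T, ((supNorm v : ℝ) ^ 3)⁻¹ := by
  refine le_trans ?_ (sum_primitiveBall_ge T (f := fun m => ((m : ℝ) ^ 3)⁻¹) fun m => by positivity)
  calc Real.log (T + 1) / 12 ≤ harmonic T / 12 := by
        gcongr
        exact_mod_cast log_add_one_le_harmonic T
    _ = ∑ m ∈ Icc 1 T, (m : ℝ) ^ 2 / 12 * ((m : ℝ) ^ 3)⁻¹ := by
        rw [harmonic_eq_sum_Icc, Rat.cast_sum, sum_div]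
        push_cast
        refine sum_congr rfl fun m hm => ?_
        have : (m : ℝ) ≠ 0 := by have := (mem_Icc.1 hm).1; positivity
        field_simp

def natRoot (k : ℕ) (B : ℝ) : ℕ := ⌊B ^ ((k : ℝ)⁻¹)⌋₊

section NatRoot

variable {k : ℕ} {B : ℝ}

lemma le_natRoot_iff (hk : k ≠ 0) (hB : 0 ≤ B) {m : ℕ} : m ≤ natRoot k B ↔ (m : ℝ) ^ k ≤ B := by
  rw [natRoot, Nat.le_floor_iff (by positivity)]
  conv_rhs => rw [← Real.rpow_inv_natCast_pow hB hk]
  exact (pow_le_pow_iff_left₀ (by positivity) (by positivity) hk).symm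

lemma lt_natRoot_add_one_pow (hk : k ≠ 0) (hB : 0 ≤ B) : B < ((natRoot k B : ℝ) + 1) ^ k := by
  conv_lhs => rw [← Real.rpow_inv_natCast_pow hB hk]
  exact pow_lt_pow_left₀ (Nat.lt_floor_add_one _) (by positivity) hk

end NatRoot

def anticanonicalHeight {n : ℕ} (x : Fin n → Fin 3 → ℤ) : ℕ := ∏ j, supNorm (x j) ^ 3

lemma anticanonicalHeight_cons {n : ℕ} (v : Fin 3 → ℤ) (x : Fin n → Fin 3 → ℤ) :
    anticanonicalHeight (Fin.cons v x : Fin (n + 1) → Fin 3 → ℤ) =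
      supNorm v ^ 3 * anticanonicalHeight x :=
  Fin.prod_univ_succ _

lemma supNorm_le_anticanonicalHeight {n : ℕ} {x : Fin n → Fin 3 → ℤ}
    (hx : ∀ j, IsPrimitiveVec (x j)) (j : Fin n) : supNorm (x j) ≤ anticanonicalHeight x :=
  (Nat.le_self_pow (by norm_num) _).trans
    (single_le_prod' (fun i _ => Nat.one_le_pow _ _ (hx i).one_le_supNorm) (mem_univ j))

lemma one_le_anticanonicalHeight {n : ℕ} {x : Fin n → Fin 3 → ℤ}
    (hx : ∀ j, IsPrimitiveVec (x j)) : 1 ≤ anticanonicalHeight x :=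
  one_le_prod' fun i _ => Nat.one_le_pow _ _ (hx i).one_le_supNorm

/-- The bound `⌊B⌋₊` on the norms only makes the finiteness visible, see `mem_tuplesOfHeightLE`. -/
def tuplesOfHeightLE (n : ℕ) (B : ℝ) : Finset (Fin n → Fin 3 → ℤ) :=
  {x ∈ Fintype.piFinset fun _ => primitiveBall 3 ⌊B⌋₊ | (anticanonicalHeight x : ℝ) ≤ B}

section TuplesOfHeightLE

variable {n : ℕ} {B : ℝ}

lemma mem_tuplesOfHeightLE {x : Fin n → Fin 3 → ℤ} :
    x ∈ tuplesOfHeightLE n B ↔ (∀ j, IsPrimitiveVec (x j)) ∧ (anticanonicalHeight x : ℝ) ≤ B := by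
  simp only [tuplesOfHeightLE, mem_filter, Fintype.mem_piFinset, mem_primitiveBall]
  refine ⟨fun h => ⟨fun j => (h.1 j).2, h.2⟩, fun h => ⟨fun j => ⟨?_, h.1 j⟩, h.2⟩⟩
  exact Nat.le_floor ((Nat.cast_le.2 (supNorm_le_anticanonicalHeight h.1 j)).trans h.2)

lemma tuplesOfHeightLE_eq_empty (hB : B < 1) : tuplesOfHeightLE n B = ∅ :=
  eq_empty_of_forall_notMem fun x hx => by
    obtain ⟨hprim, hle⟩ := mem_tuplesOfHeightLE.1 hx
    have : (1 : ℝ) ≤ anticanonicalHeight x := by exact_mod_cast one_le_anticanonicalHeight hprim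
    linarith

lemma cons_mem_tuplesOfHeightLE {v : Fin 3 → ℤ} {x : Fin n → Fin 3 → ℤ} :
    (Fin.cons v x : Fin (n + 1) → Fin 3 → ℤ) ∈ tuplesOfHeightLE (n + 1) B ↔
      IsPrimitiveVec v ∧ x ∈ tuplesOfHeightLE n (B / supNorm v ^ 3) := by
  simp only [mem_tuplesOfHeightLE, Fin.forall_fin_succ, Fin.cons_zero, Fin.cons_succ,
    anticanonicalHeight_cons, and_assoc]
  refine and_congr_right fun hv => and_congr_right fun _ => ?_
  have : (0 : ℝ) < supNorm v ^ 3 := by have := hv.one_le_supNorm; positivity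
  rw [le_div_iff₀ this, Nat.cast_mul, Nat.cast_pow, mul_comm]

lemma card_tuplesOfHeightLE_succ (n : ℕ) (B : ℝ) :
    #(tuplesOfHeightLE (n + 1) B) =
      ∑ v ∈ primitiveBall 3 ⌊B⌋₊, #(tuplesOfHeightLE n (B / supNorm v ^ 3)) := by
  rw [← card_sigma]
  refine card_nbij' (fun x => ⟨x 0, Fin.tail x⟩) (fun p => Fin.cons p.1 p.2) (fun x hx => ?_)
    (fun p hp => ?_) (fun x _ => Fin.cons_self_tail x) (fun p _ => by simp)
  · rw [mem_coe] at hx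
    have h0 := (Fintype.mem_piFinset.1 (mem_filter.1 hx).1) 0
    rw [← Fin.cons_self_tail x, cons_mem_tuplesOfHeightLE] at hx
    exact mem_sigma.2 ⟨h0, hx.2⟩
  · obtain ⟨hv, hx⟩ := mem_sigma.1 hp
    exact cons_mem_tuplesOfHeightLE.2 ⟨(mem_primitiveBall.1 hv).2, hx⟩

lemma card_tuplesOfHeightLE_one (hB : 0 ≤ B) :
    #(tuplesOfHeightLE 1 B) = #(primitiveBall 3 (natRoot 3 B)) := by
  refine card_nbij' (fun x => x 0) (fun v => fun _ => v) (fun x hx => ?_) (fun v hv => ?_)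
    (fun x _ => funext fun j => by rw [Fin.fin_one_eq_zero j]) (fun v _ => rfl)
  · obtain ⟨hprim, hle⟩ := mem_tuplesOfHeightLE.1 hx
    simp only [anticanonicalHeight, Fin.prod_univ_one] at hle
    exact mem_primitiveBall.2 ⟨(le_natRoot_iff three_ne_zero hB).2 (by exact_mod_cast hle),
      hprim 0⟩
  · obtain ⟨hle, hprim⟩ := mem_primitiveBall.1 hv
    refine mem_tuplesOfHeightLE.2 ⟨fun _ => hprim, ?_⟩
    simp only [anticanonicalHeight, Fin.prod_univ_one]
    exact_mod_cast (le_natRoot_iff three_ne_zero hB).1 hle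

end TuplesOfHeightLE

lemma card_tuplesOfHeightLE_one_le {B : ℝ} (hB : 0 ≤ B) :
    (#(tuplesOfHeightLE 1 B) : ℝ) ≤ 26 * B := by
  rw [card_tuplesOfHeightLE_one hB]
  refine (card_primitiveBall_le _).trans ?_
  gcongr
  exact (le_natRoot_iff three_ne_zero hB).1 le_rfl

lemma card_tuplesOfHeightLE_le (n : ℕ) {B : ℝ} (hB : 1 ≤ B) :
    (#(tuplesOfHeightLE (n + 1) B) : ℝ) ≤ 26 ^ (n + 1) * B * (1 + Real.log B) ^ n := by
  induction n generalizing B with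
  | zero => simpa using card_tuplesOfHeightLE_one_le (zero_le_one.trans hB)
  | succ n ih =>
    have hlogB : 0 ≤ Real.log B := Real.log_nonneg hB
    have hterm : ∀ v ∈ primitiveBall 3 ⌊B⌋₊, (#(tuplesOfHeightLE (n + 1) (B / supNorm v ^ 3)) : ℝ)
        ≤ 26 ^ (n + 1) * B * (1 + Real.log B) ^ n * ((supNorm v : ℝ) ^ 3)⁻¹ := fun v hv => by
      have hs : (1 : ℝ) ≤ (supNorm v : ℝ) ^ 3 :=
        one_le_pow₀ (Nat.one_le_cast.2 (mem_primitiveBall.1 hv).2.one_le_supNorm)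
      rcases lt_or_ge (B / supNorm v ^ 3) 1 with hlt | hge
      · rw [tuplesOfHeightLE_eq_empty hlt, card_empty, Nat.cast_zero]
        positivity
      · calc (#(tuplesOfHeightLE (n + 1) (B / supNorm v ^ 3)) : ℝ)
            ≤ 26 ^ (n + 1) * (B / supNorm v ^ 3) * (1 + Real.log (B / supNorm v ^ 3)) ^ n :=
              ih hge
          _ ≤ 26 ^ (n + 1) * (B / supNorm v ^ 3) * (1 + Real.log B) ^ n := by
              gcongr
              · linarith [Real.log_nonneg hge]
              · exact div_le_self (by linarith) hs
          _ = _ := by ring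
    calc (#(tuplesOfHeightLE (n + 2) B) : ℝ)
        ≤ ∑ v ∈ primitiveBall 3 ⌊B⌋₊,
            26 ^ (n + 1) * B * (1 + Real.log B) ^ n * ((supNorm v : ℝ) ^ 3)⁻¹ := by
          rw [card_tuplesOfHeightLE_succ, Nat.cast_sum]
          exact sum_le_sum hterm
      _ ≤ 26 ^ (n + 1) * B * (1 + Real.log B) ^ n * (26 * (1 + Real.log B)) := by
          rw [← mul_sum]
          gcongr
          refine (sum_inv_supNorm_cube_le _).trans ?_
          gcongr
          · exact_mod_cast Nat.floor_pos.2 hB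
          · exact Nat.floor_le (by linarith)
      _ = 26 ^ (n + 2) * B * (1 + Real.log B) ^ (n + 1) := by ring

lemma card_tuplesOfHeightLE_one_ge {B : ℝ} (hB : 1 ≤ B) :
    B / 288 ≤ (#(tuplesOfHeightLE 1 B) : ℝ) := by
  have hB0 : 0 ≤ B := zero_le_one.trans hB
  have hT : (1 : ℝ) ≤ natRoot 3 B := by
    exact_mod_cast (le_natRoot_iff three_ne_zero hB0).2 (by simpa)
  have hlt : B < 8 * (natRoot 3 B : ℝ) ^ 3 := calc
    B < ((natRoot 3 B : ℝ) + 1) ^ 3 := lt_natRoot_add_one_pow three_ne_zero hB0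
    _ ≤ (2 * natRoot 3 B) ^ 3 := by gcongr; linarith
    _ = 8 * (natRoot 3 B : ℝ) ^ 3 := by ring
  rw [card_tuplesOfHeightLE_one hB0]
  linarith [card_primitiveBall_ge (natRoot 3 B)]

lemma le_apply_div_of_sq_le {f : ℝ → ℝ} {c B₀ B s : ℝ} {n : ℕ} (hc : 0 ≤ c)
    (hf : ∀ X ≥ B₀, c * X * Real.log X ^ n ≤ f X) (hB : B₀ ^ 2 ≤ B) (hs1 : 1 ≤ s)
    (hs2 : s ^ 2 ≤ B) : c * (B / s) * (Real.log B / 2) ^ n ≤ f (B / s) := by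
  have hB1 : 1 ≤ B := (one_le_pow₀ hs1).trans hs2
  have hsq : B ≤ (B / s) ^ 2 := by
    rw [div_pow, le_div_iff₀ (by positivity)]
    nlinarith
  have hlog : Real.log B / 2 ≤ Real.log (B / s) := by
    have := Real.log_le_log (by linarith) hsq
    rw [Real.log_pow, Nat.cast_ofNat] at this
    linarith
  have hlogB : 0 ≤ Real.log B := Real.log_nonneg hB1
  calc c * (B / s) * (Real.log B / 2) ^ n ≤ c * (B / s) * Real.log (B / s) ^ n := by gcongr
    _ ≤ f (B / s) := hf _ ((le_abs_self B₀).trans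
        (abs_le_of_sq_le_sq (hB.trans hsq) (by positivity)))

lemma exists_le_card_tuplesOfHeightLE (n : ℕ) : ∃ c > (0 : ℝ), ∃ B₀ ≥ (1 : ℝ), ∀ B ≥ B₀,
    c * B * Real.log B ^ n ≤ #(tuplesOfHeightLE (n + 1) B) := by
  induction n with
  | zero => exact ⟨1 / 288, by norm_num, 1, le_rfl, fun B hB => by
      simpa [div_eq_inv_mul] using card_tuplesOfHeightLE_one_ge hB⟩
  | succ n ih =>
    obtain ⟨c, hc, B₀, hB₀, hcount⟩ := ih
    refine ⟨c / (72 * 2 ^ n), by positivity, B₀ ^ 2, one_le_pow₀ hB₀, fun B hB => ?_⟩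
    have hB1 : 1 ≤ B := (one_le_pow₀ hB₀).trans hB
    have hB0 : 0 ≤ B := zero_le_one.trans hB1
    have hlogB : 0 ≤ Real.log B := Real.log_nonneg hB1
    set T := natRoot 6 B
    have hT6 : (T : ℝ) ^ 6 ≤ B := (le_natRoot_iff (by norm_num) hB0).1 le_rfl
    have hterm : ∀ v ∈ primitiveBall 3 T, c * B * (Real.log B / 2) ^ n * ((supNorm v : ℝ) ^ 3)⁻¹
        ≤ #(tuplesOfHeightLE (n + 1) (B / supNorm v ^ 3)) := fun v hv => by
      obtain ⟨hvT, hprim⟩ := mem_primitiveBall.1 hv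
      have hs2 : ((supNorm v : ℝ) ^ 3) ^ 2 ≤ B := by
        rw [← pow_mul]
        exact (le_natRoot_iff (by norm_num) hB0).1 hvT
      calc c * B * (Real.log B / 2) ^ n * ((supNorm v : ℝ) ^ 3)⁻¹
          = c * (B / supNorm v ^ 3) * (Real.log B / 2) ^ n := by ring
        _ ≤ _ := le_apply_div_of_sq_le hc.le hcount hB
            (one_le_pow₀ (Nat.one_le_cast.2 hprim.one_le_supNorm)) hs2
    have hTB : T ≤ ⌊B⌋₊ := by
      refine Nat.le_floor (le_trans ?_ hT6)
      exact_mod_cast Nat.le_self_pow (by norm_num) T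
    have hlogT : Real.log B ≤ 6 * Real.log (T + 1) := by
      have := Real.log_le_log (by linarith) (lt_natRoot_add_one_pow (k := 6) (by norm_num) hB0).le
      rwa [Real.log_pow, Nat.cast_ofNat] at this
    calc c / (72 * 2 ^ n) * B * Real.log B ^ (n + 1)
        = c * B * (Real.log B / 2) ^ n * (Real.log B / 72) := by
          rw [div_pow]
          field_simp
          ring
      _ ≤ c * B * (Real.log B / 2) ^ n * ∑ v ∈ primitiveBall 3 T, ((supNorm v : ℝ) ^ 3)⁻¹ := by
          gcongr
          linarith [log_le_sum_inv_supNorm_cube T]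
      _ ≤ ∑ v ∈ primitiveBall 3 T, (#(tuplesOfHeightLE (n + 1) (B / supNorm v ^ 3)) : ℝ) := by
          rw [mul_sum]
          exact sum_le_sum hterm
      _ ≤ #(tuplesOfHeightLE (n + 2) B) := by
          rw [card_tuplesOfHeightLE_succ, Nat.cast_sum]
          exact sum_le_sum_of_subset_of_nonneg (primitiveBall_mono hTB) fun _ _ _ => by positivity

lemma natCard_eq_card_tuplesOfHeightLE (n : ℕ) (B : ℝ) :
    Nat.card {x : Fin n → Fin 3 → ℤ |
      (∀ j, IsPrimitiveVec (x j)) ∧ ∏ j, ((supNorm (x j) : ℝ)) ^ 3 ≤ B} =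
      #(tuplesOfHeightLE n B) := by
  have hset : {x : Fin n → Fin 3 → ℤ |
      (∀ j, IsPrimitiveVec (x j)) ∧ ∏ j, ((supNorm (x j) : ℝ)) ^ 3 ≤ B} =
      ↑(tuplesOfHeightLE n B) := by
    ext x
    simp [mem_tuplesOfHeightLE, anticanonicalHeight]
  rw [hset, Nat.card_coe_set_eq, Set.ncard_coe_finset]

/-- For every `n ≥ 1` there exist `c₂ ≥ c₁ > 0` and `B₀ ≥ 2` such that for every `B ≥ B₀`,
the number of `n`-tuples of primitive vectors in `ℤ³` with `∏_j ‖x⁽ʲ⁾‖∞³ ≤ B` is between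
`c₁ · B · (log B)^(n-1)` and `c₂ · B · (log B)^(n-1)`. -/
theorem stmt0 (n : ℕ) (hn : 1 ≤ n) :
    ∃ c₁ c₂ : ℝ, 0 < c₁ ∧ c₁ ≤ c₂ ∧ ∃ B₀ : ℝ, 2 ≤ B₀ ∧ ∀ B : ℝ, B₀ ≤ B →
      c₁ * (B * Real.log B ^ (n - 1)) ≤
        (Nat.card {x : Fin n → Fin 3 → ℤ |
          (∀ j, IsPrimitiveVec (x j)) ∧ ∏ j, ((supNorm (x j) : ℝ)) ^ 3 ≤ B} : ℝ) ∧
      (Nat.card {x : Fin n → Fin 3 → ℤ |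
          (∀ j, IsPrimitiveVec (x j)) ∧ ∏ j, ((supNorm (x j) : ℝ)) ^ 3 ≤ B} : ℝ) ≤
        c₂ * (B * Real.log B ^ (n - 1)) := by
  obtain ⟨m, rfl⟩ := Nat.exists_eq_add_of_le' hn
  obtain ⟨c, hc, B₀, -, hlower⟩ := exists_le_card_tuplesOfHeightLE m
  set C : ℝ := 26 ^ (m + 1) * 2 ^ m
  refine ⟨min c C, C, lt_min hc (by positivity), min_le_right _ _, max B₀ 3,
    le_max_of_le_right (by norm_num), fun B hB => ?_⟩
  have hB3 : 3 ≤ B := le_of_max_le_right hB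
  have hlogB : 1 ≤ Real.log B := by
    rw [Real.le_log_iff_exp_le (by linarith)]
    linarith [Real.exp_one_lt_d9]
  simp only [natCard_eq_card_tuplesOfHeightLE, Nat.add_sub_cancel]
  constructor
  · calc min c C * (B * Real.log B ^ m) ≤ c * B * Real.log B ^ m := by
          rw [mul_assoc]
          gcongr
          exact min_le_left _ _
      _ ≤ _ := hlower B (le_of_max_le_left hB)
  · calc (#(tuplesOfHeightLE (m + 1) B) : ℝ) ≤ 26 ^ (m + 1) * B * (1 + Real.log B) ^ m :=
          card_tuplesOfHeightLE_le m (by linarith)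
      _ ≤ 26 ^ (m + 1) * B * (2 * Real.log B) ^ m := by gcongr; linarith
      _ = C * (B * Real.log B ^ m) := by ring
end
end

section
/- Let c > 0 and let (ω_p) be a family of reals indexed by the primes with 0 ≤ ω_p < 1 for all p and ω_p ≥ 1 − c/p for every prime p > c. Then for every ε > 0 there exists a constant C > 0 such that for all Q ≥ 2, ∑_{q ≤ Q, q squarefree} ∏_{p ∣ q} ω_p/(1 − ω_p) ≥ C·Q^{2−ε}. -/
/-!
Only the prime moduli matter: for a prime `p ≥ 2c` the hypothesis gives
`ω_p / (1 - ω_p) ≥ p / (2c)`, so `G(Q) ≥ (2c)⁻¹ ∑_{2c < p ≤ Q} p`. Chebyshev's bound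
`π(x) ≫ x / log x` leaves `≫ x / log x` primes in `(x / log² x, x]`, so the prime sum is
`≫ x² / log³ x ≥ x^(2-ε)` for large `x`; on the remaining bounded range of `Q` the term `q = 1`
gives `G(Q) ≥ 1`.
-/
open Finset Filter Real Chebyshev

theorem exists_pos_mul_le_of_eventually_le {f g : ℝ → ℝ} {x₀ : ℝ}
    (hg : ContinuousOn g (Set.Ici x₀)) (hg₀ : ∀ x ≥ x₀, 0 ≤ g x) (hf : ∀ x ≥ x₀, 1 ≤ f x)
    (hev : ∀ᶠ x in atTop, g x ≤ f x) : ∃ C > 0, ∀ x ≥ x₀, C * g x ≤ f x := by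
  obtain ⟨X, hX⟩ := eventually_atTop.mp hev
  obtain ⟨M, hM⟩ := isCompact_Icc.exists_bound_of_continuousOn
    (hg.mono (Set.Icc_subset_Ici_self : Set.Icc x₀ X ⊆ _))
  refine ⟨min 1 (max M 1)⁻¹, by positivity, fun x hx => ?_⟩
  rcases le_total X x with hXx | hxX
  · calc min 1 (max M 1)⁻¹ * g x ≤ 1 * g x := by gcongr; exacts [hg₀ x hx, min_le_left _ _]
      _ ≤ f x := by rw [one_mul]; exact hX x hXx
  · have hgM : g x ≤ max M 1 := by
      calc g x ≤ ‖g x‖ := le_norm_self _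
        _ ≤ max M 1 := (hM x ⟨hx, hxX⟩).trans (le_max_left _ _)
    calc min 1 (max M 1)⁻¹ * g x ≤ (max M 1)⁻¹ * max M 1 := by
          gcongr; exacts [hg₀ x hx, min_le_right _ _]
      _ = 1 := inv_mul_cancel₀ (by positivity)
      _ ≤ f x := hf x hx

theorem div_le_div_one_sub_of_one_sub_div_le {c x w : ℝ} (hc : 0 < c) (hx : 2 * c ≤ x)
    (hw : w < 1) (h : 1 - c / x ≤ w) : x / (2 * c) ≤ w / (1 - w) := by
  have hx₀ : 0 < x := by linarith
  have hcx : x * (1 - w) ≤ c := by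
    have := mul_le_mul_of_nonneg_left (sub_le_comm.mp h) hx₀.le
    rwa [mul_div_cancel₀ _ hx₀.ne'] at this
  rw [div_le_div_iff₀ (by positivity) (by linarith)]
  nlinarith

def squarefreeProdSum (f : ℕ → ℝ) (N : ℕ) : ℝ :=
  ∑ q ∈ (range (N + 1)).filter Squarefree, ∏ p ∈ q.primeFactors, f p

section squarefreeProdSum

variable {f : ℕ → ℝ}

theorem prod_primeFactors_nonneg (hf : ∀ p, p.Prime → 0 ≤ f p) (q : ℕ) :
    0 ≤ ∏ p ∈ q.primeFactors, f p :=
  prod_nonneg fun p hp => hf p (Nat.prime_of_mem_primeFactors hp)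

theorem one_le_squarefreeProdSum (hf : ∀ p, p.Prime → 0 ≤ f p) {N : ℕ} (hN : 1 ≤ N) :
    1 ≤ squarefreeProdSum f N := by
  have h1 : 1 ∈ (range (N + 1)).filter Squarefree :=
    mem_filter.mpr ⟨mem_range.mpr (by omega), squarefree_one⟩
  unfold squarefreeProdSum
  simpa using single_le_sum (fun q _ => prod_primeFactors_nonneg hf q) h1

theorem sum_le_squarefreeProdSum (hf : ∀ p, p.Prime → 0 ≤ f p) {N : ℕ} {s : Finset ℕ}
    (hs : s ⊆ Nat.primesLE N) : ∑ p ∈ s, f p ≤ squarefreeProdSum f N := by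
  have hsub : s ⊆ (range (N + 1)).filter Squarefree := fun p hp => by
    have hp' := Nat.mem_primesLE.mp (hs hp)
    exact mem_filter.mpr ⟨mem_range.mpr (by omega), hp'.2.squarefree⟩
  calc ∑ p ∈ s, f p = ∑ p ∈ s, ∏ r ∈ p.primeFactors, f r :=
        sum_congr rfl fun p hp => by
          rw [(Nat.mem_primesLE.mp (hs hp)).2.primeFactors, prod_singleton]
    _ ≤ squarefreeProdSum f N :=
        sum_le_sum_of_subset_of_nonneg hsub fun q _ _ => prod_primeFactors_nonneg hf q

end squarefreeProdSum

theorem primeCounting_sub_le_card_filter_lt (N : ℕ) {T : ℝ} (hT : 0 ≤ T) :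
    (Nat.primeCounting N : ℝ) - T ≤ #((Nat.primesLE N).filter fun p : ℕ => T < p) := by
  have hsmall : #((Nat.primesLE N).filter fun p : ℕ => ¬ T < p) ≤ ⌊T⌋₊ := by
    calc #((Nat.primesLE N).filter fun p : ℕ => ¬ T < p) ≤ #(Icc 1 ⌊T⌋₊) := by
          refine card_le_card fun p hp => ?_
          obtain ⟨hpN, hpT⟩ := mem_filter.mp hp
          exact mem_Icc.mpr ⟨(Nat.prime_of_mem_primesLE hpN).one_le, Nat.le_floor (not_lt.mp hpT)⟩
      _ = ⌊T⌋₊ := by simp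
  have hsplit := card_filter_add_card_filter_not (s := Nat.primesLE N) fun p : ℕ => T < p
  rw [Nat.primesLE_card_eq_primeCounting] at hsplit
  have hfloor : (⌊T⌋₊ : ℝ) ≤ T := Nat.floor_le hT
  have hcount :
      (Nat.primeCounting N : ℝ) ≤ #((Nat.primesLE N).filter fun p : ℕ => T < p) + ⌊T⌋₊ := by
    exact_mod_cast hsplit.symm.le.trans (Nat.add_le_add_left hsmall _)
  linarith

theorem mul_primeCounting_sub_le_sum_filter_lt (N : ℕ) {T : ℝ} (hT : 0 ≤ T) :
    T * (Nat.primeCounting N - T) ≤ ∑ p ∈ (Nat.primesLE N).filter (fun p : ℕ => T < p), (p : ℝ) :=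
  calc T * (Nat.primeCounting N - T) ≤ T * #((Nat.primesLE N).filter fun p : ℕ => T < p) :=
        mul_le_mul_of_nonneg_left (primeCounting_sub_le_card_filter_lt N hT) hT
    _ = #((Nat.primesLE N).filter fun p : ℕ => T < p) • T := by rw [nsmul_eq_mul, mul_comm]
    _ ≤ _ := card_nsmul_le_sum _ _ _ fun p hp => (mem_filter.mp hp).2.le

theorem eventually_div_log_le_primeCounting :
    ∀ᶠ x : ℝ in atTop, x / (4 * log x) ≤ Nat.primeCounting ⌊x⌋₊ := by
  have hlog : ∀ᶠ x : ℝ in atTop, log (x + 2) ≤ (x + 2) / 8 := by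
    have hshift := isLittleO_log_id_atTop.comp_tendsto
      (tendsto_atTop_add_const_right _ 2 tendsto_id)
    filter_upwards [hshift.bound (by norm_num : (0 : ℝ) < 1 / 8), eventually_ge_atTop 0]
      with x hx hx₀
    have hx₂ : (0 : ℝ) ≤ x + 2 := by linarith
    simp only [Function.comp_apply, id, norm_eq_abs, abs_of_nonneg hx₂] at hx
    linarith [le_abs_self (log (x + 2))]
  filter_upwards [hlog, eventually_ge_atTop 6] with x hx hx₆
  have hlog_pos : 0 < log x := log_pos (by linarith)
  refine le_trans ?_ (pi_ge' (by linarith))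
  rw [div_le_div_iff₀ (by positivity) hlog_pos]
  have hnum : x / 4 ≤ (x - 1) * log 2 - log (x + 2) := by nlinarith [log_two_gt_d9]
  nlinarith [mul_le_mul_of_nonneg_right hnum hlog_pos.le]

theorem eventually_rpow_le_sum_primesLE_filter_lt (a : ℝ) {δ : ℝ} (hδ : 0 < δ) :
    ∀ᶠ x : ℝ in atTop,
      x ^ (2 - δ) ≤ ∑ p ∈ (Nat.primesLE ⌊x⌋₊).filter (fun p : ℕ => a < p), (p : ℝ) := by
  have hcube : ∀ᶠ x : ℝ in atTop, 8 * log x ^ 3 ≤ x ^ δ := by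
    filter_upwards [(isLittleO_log_rpow_rpow_atTop 3 hδ).bound (by norm_num : (0 : ℝ) < 1 / 8),
      tendsto_log_atTop.eventually_ge_atTop 0, eventually_ge_atTop 0] with x hx hlog hx₀
    rw [norm_of_nonneg (by positivity), norm_of_nonneg (by positivity)] at hx
    rw [show (3 : ℝ) = (3 : ℕ) by norm_num, rpow_natCast] at hx
    linarith
  have hsq : ∀ᶠ x : ℝ in atTop, (|a| + 1) * log x ^ 2 ≤ x := by
    filter_upwards [(isLittleO_pow_log_id_atTop (n := 2)).bound
      (by positivity : (0 : ℝ) < (|a| + 1)⁻¹), eventually_ge_atTop 0] with x hx hx₀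
    rw [norm_of_nonneg (by positivity), id, norm_of_nonneg hx₀] at hx
    rwa [← le_div_iff₀' (by positivity), div_eq_inv_mul]
  filter_upwards [eventually_div_log_le_primeCounting, tendsto_log_atTop.eventually_ge_atTop 8,
    hcube, hsq, eventually_gt_atTop 0] with x hπ hlog hcube hsq hx₀
  have hlog₀ : 0 < log x := by linarith
  set T := x / log x ^ 2
  have haT : a ≤ T := by
    rw [le_div_iff₀ (by positivity)]
    nlinarith [le_abs_self a, sq_nonneg (log x)]
  have hT : T ≤ x / (8 * log x) := div_le_div_of_nonneg_left hx₀.le (by positivity) (by nlinarith)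
  calc x ^ (2 - δ) = x ^ 2 / x ^ δ := by rw [rpow_sub hx₀, rpow_two]
    _ ≤ x ^ 2 / (8 * log x ^ 3) := by gcongr
    _ = T * (x / (4 * log x) - x / (8 * log x)) := by simp only [T]; field_simp; ring
    _ ≤ T * (Nat.primeCounting ⌊x⌋₊ - T) := by gcongr
    _ ≤ ∑ p ∈ (Nat.primesLE ⌊x⌋₊).filter (fun p : ℕ => T < p), (p : ℝ) :=
        mul_primeCounting_sub_le_sum_filter_lt _ (by positivity)
    _ ≤ ∑ p ∈ (Nat.primesLE ⌊x⌋₊).filter (fun p : ℕ => a < p), (p : ℝ) :=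
        sum_le_sum_of_subset_of_nonneg (monotone_filter_right _ fun p _ => haT.trans_lt)
          fun p _ _ => p.cast_nonneg

/-- Let `c > 0` and `(ω_p)_p` be reals indexed by primes with `0 ≤ ω_p < 1` and
`ω_p ≥ 1 − c/p` for every prime `p > c`.  Then for every `ε > 0` there is `C > 0` such that
for all `Q ≥ 2`, `∑_{q ≤ Q squarefree} ∏_{p ∣ q} ω_p/(1−ω_p) ≥ C·Q^(2−ε)`. -/
theorem stmt5 (c : ℝ) (hc : 0 < c) (ω : ℕ → ℝ)
    (hω : ∀ p : ℕ, p.Prime → 0 ≤ ω p ∧ ω p < 1)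
    (hlb : ∀ p : ℕ, p.Prime → c < (p : ℝ) → 1 - c / p ≤ ω p) :
    ∀ ε : ℝ, 0 < ε → ∃ C : ℝ, 0 < C ∧ ∀ Q : ℝ, 2 ≤ Q →
      C * Q ^ (2 - ε) ≤
        ∑ q ∈ (Finset.range (⌊Q⌋₊ + 1)).filter Squarefree,
          ∏ p ∈ q.primeFactors, ω p / (1 - ω p) := by
  intro ε hε
  have hweight (p : ℕ) (hp : p.Prime) : 0 ≤ ω p / (1 - ω p) :=
    div_nonneg (hω p hp).1 (sub_nonneg.mpr (hω p hp).2.le)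
  have hev : ∀ᶠ Q : ℝ in atTop,
      (2 * c)⁻¹ * Q ^ (2 - ε) ≤ squarefreeProdSum (fun p => ω p / (1 - ω p)) ⌊Q⌋₊ := by
    filter_upwards [eventually_rpow_le_sum_primesLE_filter_lt (2 * c) hε] with Q hQ
    calc (2 * c)⁻¹ * Q ^ (2 - ε)
        ≤ ∑ p ∈ (Nat.primesLE ⌊Q⌋₊).filter (fun p : ℕ => 2 * c < p), (p : ℝ) / (2 * c) := by
          rw [← sum_div, inv_mul_eq_div]
          gcongr
      _ ≤ ∑ p ∈ (Nat.primesLE ⌊Q⌋₊).filter (fun p : ℕ => 2 * c < p), ω p / (1 - ω p) :=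
          sum_le_sum fun p hp => by
            obtain ⟨hpQ, hcp⟩ := mem_filter.mp hp
            have hp := Nat.prime_of_mem_primesLE hpQ
            exact div_le_div_one_sub_of_one_sub_div_le hc hcp.le (hω p hp).2
              (hlb p hp (by linarith))
      _ ≤ _ := sum_le_squarefreeProdSum hweight (filter_subset _ _)
  obtain ⟨C, hC, hCQ⟩ := exists_pos_mul_le_of_eventually_le
    (g := fun Q => (2 * c)⁻¹ * Q ^ (2 - ε)) (x₀ := 2)
    (continuousOn_const.mul (continuousOn_id.rpow_const fun Q hQ =>
      Or.inl (show Q ≠ 0 by linarith [Set.mem_Ici.mp hQ])))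
    (fun Q hQ => mul_nonneg (by positivity) (rpow_nonneg (by linarith) _))
    (fun Q hQ => one_le_squarefreeProdSum hweight (Nat.le_floor (by norm_cast at hQ ⊢; linarith))) hev
  exact ⟨C * (2 * c)⁻¹, by positivity, fun Q hQ => (mul_assoc _ _ _).trans_le (hCQ Q hQ)⟩
end

section
/- Let N ≥ 1, let F ∈ ℤ[x₀,…,x_N] be a polynomial, let p be a prime, let m ≥ 1 be an integer, and let a ∈ ℤ^{N+1} satisfy F(a) ≡ 0 (mod p^m) and ∂F/∂x_i(a) ≢ 0 (mod p) for at least one index i. Then for every integer ℓ ≥ m, the number of y ∈ (ℤ/p^ℓℤ)^{N+1} such that F(a + p^m·y) ≡ 0 (mod p^ℓ) equals p^{Nℓ+m}. (Here F(a + p^m·y) mod p^ℓ is well defined: it is independent of the choice of integer lift of y modulo p^ℓ.) -/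
/-!
Put `c = p ^ m` and `F(a) = c b`. A second-order Taylor expansion gives, in `ℤ/p^ℓ`,
`F(a + c y) = c (b + ∑ ∂ᵢF(a) yᵢ + c Q(y))`. Since `∂_{i₀}F(a)` is a unit and `c` is nilpotent,
the bracket is a bijection in the coordinate `y_{i₀}` once the other coordinates are fixed, so each
of the `p^{Nℓ}` lines in direction `i₀` carries exactly as many solutions as there are `u` with
`c u = 0`, namely `p ^ m`.
-/

open MvPolynomial Function

namespace MvPolynomial

variable {R σ : Type*} [CommRing R]

theorem sub_dvd_eval_update_sub [DecidableEq σ] (Q : MvPolynomial σ R) (x : σ → R) (i : σ)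
    (t s : R) : t - s ∣ eval (update x i t) Q - eval (update x i s) Q := by
  induction Q using MvPolynomial.induction_on with
  | C r => simp
  | add f g hf hg => simpa only [map_add, add_sub_add_comm] using dvd_add hf hg
  | mul_X f j hf =>
    have hX : t - s ∣ update x i t j - update x i s j := by
      obtain rfl | h := eq_or_ne j i
      · simp
      · simp [update_of_ne h]
    simp only [eval_mul, eval_X]
    convert dvd_add (dvd_mul_of_dvd_left hf (update x i t j))
      (dvd_mul_of_dvd_right hX (eval (update x i s) f)) using 1
    ring

theorem exists_eval_add_mul_eq_add_sum_pderiv [Fintype σ] (F : MvPolynomial σ R) (a : σ → R)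
    (c : R) :
    ∃ Q : MvPolynomial σ R, ∀ y : σ → R,
      eval (fun i => a i + c * y i) F =
        eval a F + c * ∑ i, eval a (pderiv i F) * y i + c ^ 2 * eval y Q := by
  classical
  induction F using MvPolynomial.induction_on with
  | C r => exact ⟨0, by simp⟩
  | add f g hf hg =>
    obtain ⟨Qf, hQf⟩ := hf
    obtain ⟨Qg, hQg⟩ := hg
    refine ⟨Qf + Qg, fun y => ?_⟩
    simp only [map_add, hQf, hQg, add_mul, Finset.sum_add_distrib]
    ring
  | mul_X f j hf =>
    obtain ⟨Q, hQ⟩ := hf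
    refine ⟨Q * C (a j) + (∑ i, C (eval a (pderiv i f)) * X i) * X j + C c * Q * X j,
      fun y => ?_⟩
    have hsum : ∑ i, eval a (pderiv i (f * X j)) * y i =
        eval a f * y j + a j * ∑ i, eval a (pderiv i f) * y i := by
      simp [pderiv_X, Pi.single_apply, apply_ite (eval a), mul_add, Finset.sum_add_distrib,
        Finset.mul_sum, mul_comm, mul_left_comm]
    simp only [eval_mul, eval_X, hQ, hsum, eval_add, eval_C, eval_sum]
    ring

theorem injective_eval_update_of_isUnit_of_isNilpotent [Fintype σ] [DecidableEq σ] {c : R}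
    (hc : IsNilpotent c) {d : σ → R} {i : σ} (hd : IsUnit (d i)) (b : R) (Q : MvPolynomial σ R)
    (y : σ → R) :
    Injective fun t => b + ∑ j, d j * update y i t j + c * eval (update y i t) Q := by
  intro t s hts
  obtain ⟨e, he⟩ := sub_dvd_eval_update_sub Q y i t s
  have hlin : ∀ u, ∑ j, d j * update y i u j = d i * u + ∑ j ∈ {i}ᶜ, d j * y j := by
    intro u
    rw [Fintype.sum_eq_add_sum_compl i, update_self]
    congr 1
    refine Finset.sum_congr rfl fun j hj => ?_
    rw [update_of_ne (by simpa using hj)]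
  have hunit : IsUnit (d i + c * e) :=
    ((Commute.all c e).isNilpotent_mul_right hc).isUnit_add_left_of_commute hd (Commute.all _ _)
  have hprod : (t - s) * (d i + c * e) = 0 := by
    simp only [hlin] at hts
    linear_combination hts - c * he
  exact sub_eq_zero.mp (hunit.mul_left_eq_zero.mp hprod)

end MvPolynomial

theorem Fin.card_setOf_eq_of_card_insertNth {n : ℕ} {α : Type*} [Fintype α] (i : Fin (n + 1))
    (P : (Fin (n + 1) → α) → Prop) (c : ℕ)
    (h : ∀ r : Fin n → α, Nat.card {t | P (i.insertNth t r)} = c) :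
    Nat.card {y | P y} = Fintype.card α ^ n * c := by
  classical
  let e := ((Equiv.prodComm _ _).trans (Fin.insertNthEquiv (fun _ => α) i)).subtypeEquiv
    (p := fun z : (Fin n → α) × α => P (i.insertNth z.2 z.1)) (q := P) fun _ => Iff.rfl
  calc Nat.card {y | P y} = Nat.card (Σ r : Fin n → α, {t | P (i.insertNth t r)}) :=
        Nat.card_congr (e.symm.trans (Equiv.subtypeProdEquivSigmaSubtype
          fun r t => P (i.insertNth t r)))
    _ = Fintype.card α ^ n * c := by
      rw [Nat.card_sigma, Finset.sum_congr rfl fun r _ => h r, Finset.sum_const, Finset.card_univ,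
        Fintype.card_fun, Fintype.card_fin, smul_eq_mul]

theorem ZMod.card_setOf_natCast_mul_eq_zero {a b n : ℕ} [NeZero a] [NeZero b] (h : a * b = n) :
    Nat.card {u : ZMod n | (a : ZMod n) * u = 0} = a := by
  subst h
  let f := (ZMod.castHom (dvd_mul_left b a) (ZMod b)).toAddMonoidHom
  have hker : {u : ZMod (a * b) | (a : ZMod (a * b)) * u = 0} = f.ker := by
    ext u
    rw [SetLike.mem_coe, AddMonoidHom.mem_ker, Set.mem_ofPred_eq, ← ZMod.natCast_zmod_val u]
    simp only [f, RingHom.toAddMonoidHom_eq_coe, AddMonoidHom.coe_coe, map_natCast]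
    rw [← Nat.cast_mul, ZMod.natCast_eq_zero_iff, ZMod.natCast_eq_zero_iff,
      Nat.mul_dvd_mul_iff_left (Nat.pos_of_neZero a)]
  have := f.ker.card_mul_index
  rw [AddSubgroup.index_ker, AddMonoidHom.range_eq_top.mpr (ZMod.ringHom_surjective _),
    AddSubgroup.card_top, Nat.card_zmod, Nat.card_zmod] at this
  rw [hker]
  exact Nat.eq_of_mul_eq_mul_right (Nat.pos_of_neZero b) this

theorem ZMod.card_setOf_pow_mul_eq_zero_of_injective {p m ℓ : ℕ} [NeZero p] (h : m ≤ ℓ)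
    {g : ZMod (p ^ ℓ) → ZMod (p ^ ℓ)} (hg : Injective g) :
    Nat.card {t | (p : ZMod (p ^ ℓ)) ^ m * g t = 0} = p ^ m := by
  rw [← ZMod.card_setOf_natCast_mul_eq_zero (a := p ^ m) (b := p ^ (ℓ - m))
    (by rw [← pow_add, Nat.add_sub_cancel' h]), Nat.cast_pow]
  exact Nat.card_congr
    ((Equiv.ofBijective g (Finite.injective_iff_bijective.mp hg)).subtypeEquiv fun _ => Iff.rfl)

theorem ZMod.isUnit_intCast_of_not_dvd {p : ℕ} (hp : p.Prime) (k : ℕ) {x : ℤ}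
    (hx : ¬(p : ℤ) ∣ x) : IsUnit (x : ZMod (p ^ k)) := by
  have h : IsCoprime x ((p ^ k : ℕ) : ℤ) := by
    push_cast
    exact ((Nat.prime_iff_prime_int.mp hp).coprime_iff_not_dvd.mpr hx).symm.pow_right
  exact isUnit_iff_exists_inv.mpr ⟨_, ZMod.coe_int_mul_inv_eq_one h⟩

theorem stmt12_general (N : ℕ) (F : MvPolynomial (Fin (N + 1)) ℤ)
    (p : ℕ) (hp : p.Prime) (m : ℕ) (hm : 1 ≤ m) (a : Fin (N + 1) → ℤ)
    (ha : ((p : ℤ)) ^ m ∣ eval a F)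
    (hsm : ∃ i, ¬ ((p : ℤ) ∣ eval a (pderiv i F))) :
    ∀ ℓ : ℕ, m ≤ ℓ →
      Nat.card {y : Fin (N + 1) → ZMod (p ^ ℓ) |
        eval (fun i => (a i : ZMod (p ^ ℓ)) + ((p : ZMod (p ^ ℓ))) ^ m * y i)
          (MvPolynomial.map (Int.castRingHom (ZMod (p ^ ℓ))) F) = 0}
      = p ^ (N * ℓ + m) := by
  intro ℓ hℓ
  obtain ⟨i, hi⟩ := hsm
  obtain ⟨b, hb⟩ := ha
  have : NeZero p := ⟨hp.ne_zero⟩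
  set φ := Int.castRingHom (ZMod (p ^ ℓ))
  set c : ZMod (p ^ ℓ) := (p : ZMod (p ^ ℓ)) ^ m
  set d : Fin (N + 1) → ZMod (p ^ ℓ) := fun j => φ (eval a (pderiv j F))
  have hc_nil : IsNilpotent c :=
    IsNilpotent.pow_of_pos ⟨ℓ, by exact_mod_cast ZMod.natCast_self (p ^ ℓ)⟩ (by omega)
  have hcast (G) : eval (fun j => (a j : ZMod (p ^ ℓ))) (map φ G) = φ (eval a G) := by
    rw [eval_map, eval₂_comp]
    rfl
  obtain ⟨Q, hQ⟩ :=
    exists_eval_add_mul_eq_add_sum_pderiv (map φ F) (fun j => (a j : ZMod (p ^ ℓ))) c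
  have hfactor : ∀ y, eval (fun j => (a j : ZMod (p ^ ℓ)) + c * y j) (map φ F) =
      c * (φ b + ∑ j, d j * y j + c * eval y Q) := by
    intro y
    simp only [hQ, pderiv_map, hcast, hb, d, map_mul, map_pow, map_natCast]
    ring
  have hslice : ∀ r : Fin N → ZMod (p ^ ℓ), Nat.card {t | c * (φ b +
      ∑ j, d j * i.insertNth t r j + c * eval (i.insertNth t r) Q) = 0} = p ^ m := by
    intro r
    refine ZMod.card_setOf_pow_mul_eq_zero_of_injective hℓ ?_
    simpa only [Fin.update_insertNth] using injective_eval_update_of_isUnit_of_isNilpotent hc_nil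
      (d := d) (ZMod.isUnit_intCast_of_not_dvd hp ℓ hi) (φ b) Q (i.insertNth 0 r)
  simp only [hfactor]
  rw [Fin.card_setOf_eq_of_card_insertNth i _ _ hslice, ZMod.card, ← pow_mul, ← pow_add,
    mul_comm ℓ]

/-- Hensel-lifting count: if `a` is a solution of `F ≡ 0 (mod p^m)` at which some partial
derivative of `F` is a unit mod `p`, then for every `ℓ ≥ m` the number of
`y ∈ (ℤ/p^ℓℤ)^{N+1}` with `F(a + p^m y) ≡ 0 (mod p^ℓ)` is exactly `p^{Nℓ+m}`. -/
theorem stmt12 (N : ℕ) (hN : 1 ≤ N) (F : MvPolynomial (Fin (N + 1)) ℤ)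
    (p : ℕ) (hp : p.Prime) (m : ℕ) (hm : 1 ≤ m) (a : Fin (N + 1) → ℤ)
    (ha : ((p : ℤ)) ^ m ∣ eval a F)
    (hsm : ∃ i, ¬ ((p : ℤ) ∣ eval a (pderiv i F))) :
    ∀ ℓ : ℕ, m ≤ ℓ →
      Nat.card {y : Fin (N + 1) → ZMod (p ^ ℓ) |
        eval (fun i => (a i : ZMod (p ^ ℓ)) + ((p : ZMod (p ^ ℓ))) ^ m * y i)
          (MvPolynomial.map (Int.castRingHom (ZMod (p ^ ℓ))) F) = 0}
      = p ^ (N * ℓ + m) :=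
  stmt12_general N F p hp m hm a ha hsm
end

section
/- Let N ≥ 1, d ≥ 1 and let F ∈ ℤ[x₀,…,x_N] be homogeneous of degree d. Let p be a prime such that for every x ∈ 𝔽_p^{N+1} with x ≠ 0 and F(x) = 0 in 𝔽_p, at least one partial derivative ∂F/∂x_i(x) is nonzero in 𝔽_p. Then for every integer ℓ ≥ 2, #X̂(ℤ/p^ℓℤ) = p^N · #X̂(ℤ/p^{ℓ−1}ℤ), where for k ≥ 1, X̂(ℤ/p^kℤ) denotes the set of x ∈ (ℤ/p^kℤ)^{N+1} whose reduction modulo p is nonzero and which satisfy F(x) = 0 in ℤ/p^kℤ. -/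
/-! Reduction modulo `p ^ k` maps `X̂(ℤ/p^{k+1})` to `X̂(ℤ/p^k)`, and we count each fibre. The lifts
of a point `x` are `x̃ + p^k t` with `t ∈ 𝔽_p^{N+1}`. Since `(p^k)² = 0` modulo `p^{k+1}`, Taylor
expansion is exact to first order: `F(x̃ + p^k t) = F(x̃) + p^k ∑ tᵢ ∂ᵢF(x̃)`. Writing
`F(x̃) = p^k m`, the lift lies on `X̂` iff `m + ∑ tᵢ ∂ᵢF(x̄) = 0` in `𝔽_p`, where `x̄ = x mod p`.
This is an affine hyperplane because smoothness makes the gradient at `x̄` nonzero, so each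
fibre has `p^N` points. -/

noncomputable section
open MvPolynomial

/-- `X̂(ℤ/p^kℤ)`: the points of `(ℤ/p^kℤ)^{N+1}` whose reduction mod `p` is nonzero and
which satisfy `F = 0` in `ℤ/p^kℤ`. -/
def Xhat (N : ℕ) (F : MvPolynomial (Fin (N + 1)) ℤ) (p k : ℕ) :
    Set (Fin (N + 1) → ZMod (p ^ k)) :=
  {x | (∃ i, ¬ (p ∣ (x i).val)) ∧
    eval x (MvPolynomial.map (Int.castRingHom (ZMod (p ^ k))) F) = 0}

open Function Set

theorem Nat.card_eq_mul_of_forall_card_fiber {α β : Type*} [Finite α] [Finite β] (f : α → β)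
    {s : Set α} {t : Set β} (hst : MapsTo f s t) {c : ℕ}
    (hc : ∀ b ∈ t, Nat.card {a // a ∈ s ∧ f a = b} = c) :
    Nat.card s = c * Nat.card t := by
  have : Fintype t := Fintype.ofFinite t
  let e : (Σ b : t, {a // a ∈ s ∧ f a = b}) ≃ s :=
    { toFun := fun x => ⟨x.2.1, x.2.2.1⟩
      invFun := fun a => ⟨⟨f a, hst a.2⟩, a.1, a.2, rfl⟩
      left_inv := by rintro ⟨b, a, ha, h⟩; obtain rfl : ⟨f a, hst ha⟩ = b := Subtype.ext h; rfl
      right_inv := fun _ => rfl }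
  rw [← Nat.card_congr e, Nat.card_sigma, Finset.sum_congr rfl fun b _ => hc b.1 b.2,
    Finset.sum_const, smul_eq_mul, Finset.card_univ, Nat.card_eq_fintype_card, mul_comm]

theorem Function.Exact.card_fiber_comp_eq {A B C σ Fε Fπ : Type*} [AddGroup A] [AddGroup B]
    [AddGroup C] [FunLike Fε C A] [AddMonoidHomClass Fε C A] [FunLike Fπ A B]
    [AddMonoidHomClass Fπ A B] {ε : Fε} {π : Fπ} (hε : Injective ε) (h : Exact ε π) (a : σ → A)
    (P : (σ → A) → Prop) :
    Nat.card {y // P y ∧ π ∘ y = π ∘ a} = Nat.card {t : σ → C // P (a + ε ∘ t)} := by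
  have hfiber (t : σ → C) : π ∘ (a + ε ∘ t) = π ∘ a :=
    funext fun i => by simp [h.apply_apply_eq_zero]
  refine (Nat.card_congr (Equiv.ofBijective (fun t => ⟨a + ε ∘ t, t.2, hfiber t⟩) ⟨?_, ?_⟩)).symm
  · rintro ⟨s, _⟩ ⟨t, _⟩ hst
    exact Subtype.ext (hε.comp_left (add_left_cancel (congrArg Subtype.val hst)))
  · rintro ⟨y, hy, hπ⟩
    have (i : σ) : ∃ c, ε c = -a i + y i :=
      (h _).1 (by rw [map_add, map_neg, neg_add_eq_zero]; exact (congrFun hπ i).symm)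
    choose t ht using this
    have hy' : a + ε ∘ t = y := funext fun i => by
      rw [Pi.add_apply, comp_apply, ht, add_neg_cancel_left]
    exact ⟨⟨t, hy' ▸ hy⟩, Subtype.ext hy'⟩

theorem card_linear_equation_solutions {K ι : Type*} [Field K] [Fintype K] [Fintype ι]
    {g : ι → K} (hg : g ≠ 0) (c : K) :
    Nat.card {t : ι → K // c + ∑ i, t i * g i = 0} = Fintype.card K ^ (Fintype.card ι - 1) := by
  classical
  let L : (ι → K) →+ K := AddMonoidHom.mk' (fun t => ∑ i, t i * g i) fun s t => by
    simp only [Pi.add_apply, add_mul, Finset.sum_add_distrib]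
  obtain ⟨i₀, hi₀⟩ := Function.ne_iff.1 hg
  have hL : Surjective L := fun b => ⟨Pi.single i₀ (b / g i₀), by
    simp [L, Pi.single_apply, div_mul_cancel₀ _ hi₀]⟩
  have hfiber : Nat.card {t : ι → K // c + ∑ i, t i * g i = 0} = Nat.card L.ker :=
    (Nat.card_congr (Equiv.subtypeEquivRight fun t => add_eq_zero_iff_eq_neg')).trans
      (Nat.card_congr (L.fiberEquivKerOfSurjective hL (-c)))
  have hker : Nat.card L.ker * Fintype.card K = Fintype.card K ^ Fintype.card ι := by
    rw [← Nat.card_eq_fintype_card, ← Nat.card_eq_fintype_card, ← Nat.card_fun,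
      ← L.ker.card_mul_index, AddSubgroup.index_ker, L.range_eq_top_of_surjective hL,
      AddSubgroup.card_top]
  have hι : Fintype.card ι = Fintype.card ι - 1 + 1 :=
    (Nat.sub_add_cancel (Fintype.card_pos_iff.2 ⟨i₀⟩)).symm
  rw [hι, pow_succ] at hker
  rw [hfiber, Nat.eq_of_mul_eq_mul_right Fintype.card_pos hker]

namespace MvPolynomial

theorem eval_add_of_mul_eq_zero {R σ : Type*} [CommRing R] [Fintype σ]
    (G : MvPolynomial σ R) (x z : σ → R) (hz : ∀ i j, z i * z j = 0) :
    eval (x + z) G = eval x G + ∑ i, z i * eval x (pderiv i G) := by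
  classical
  induction G using MvPolynomial.induction_on with
  | C a => simp
  | add f g hf hg => simp only [map_add, hf, hg, mul_add, Finset.sum_add_distrib]; ring
  | mul_X f j ih =>
    have hquad : (∑ i, z i * eval x (pderiv i f)) * z j = 0 := by
      simp only [Finset.sum_mul, mul_right_comm _ _ (z j), hz, zero_mul, Finset.sum_const_zero]
    have hX : ∑ i, z i * (eval x f * eval x (pderiv i (X j))) = z j * eval x f := by
      simp [pderiv_X, Pi.single_apply]
    have hlin : ∑ i, z i * (x j * eval x (pderiv i f)) =
        (∑ i, z i * eval x (pderiv i f)) * x j := by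
      rw [Finset.sum_mul]; exact Finset.sum_congr rfl fun i _ => by ring
    simp only [map_mul, eval_X, ih, Derivation.leibniz, smul_eq_mul, map_add, Pi.add_apply,
      mul_add, Finset.sum_add_distrib, hX, hlin]
    linear_combination hquad

theorem map_eval_map_intCast {σ R S : Type*} [CommRing R] [CommRing S] (f : R →+* S)
    (x : σ → R) (F : MvPolynomial σ ℤ) :
    f (eval x (map (Int.castRingHom R) F)) = eval (f ∘ x) (map (Int.castRingHom S) F) := by
  rw [map_eval, map_map, RingHom.ext_int (f.comp _) (Int.castRingHom S)]

end MvPolynomial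

namespace ZMod

theorem castHom_eq_zero_iff_dvd_val {n p : ℕ} [NeZero n] (h : p ∣ n) (z : ZMod n) :
    castHom h (ZMod p) z = 0 ↔ p ∣ z.val := by
  rw [castHom_apply, ← natCast_val, natCast_eq_zero_iff]

theorem dvd_val_castHom_iff {n m p : ℕ} [NeZero n] [NeZero m] (hpm : p ∣ m) (hmn : m ∣ n)
    (z : ZMod n) : p ∣ (castHom hmn (ZMod m) z).val ↔ p ∣ z.val := by
  rw [← castHom_eq_zero_iff_dvd_val hpm, ← castHom_eq_zero_iff_dvd_val (hpm.trans hmn),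
    ← RingHom.comp_apply, castHom_comp]

variable (p k : ℕ)

def mulPowHom : ZMod p →+ ZMod (p ^ (k + 1)) :=
  ZMod.lift p ⟨(AddMonoidHom.mulLeft ((p ^ k : ℕ) : ZMod (p ^ (k + 1)))).comp (Int.castAddHom _),
    by
      show ((p ^ k : ℕ) : ZMod (p ^ (k + 1))) * ((p : ℤ) : ZMod _) = 0
      rw [Int.cast_natCast, ← Nat.cast_mul, ← pow_succ, ZMod.natCast_self]⟩

variable {p k}

theorem mulPowHom_intCast (a : ℤ) : mulPowHom p k a = (p ^ k : ℕ) * (a : ZMod (p ^ (k + 1))) :=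
  ZMod.lift_coe _ _ _

theorem mulPowHom_mul (t : ZMod p) (u : ZMod (p ^ (k + 1))) :
    mulPowHom p k t * u =
      mulPowHom p k (t * castHom (dvd_pow_self p (Nat.add_one_ne_zero k)) _ u) := by
  obtain ⟨a, rfl⟩ := intCast_surjective t
  obtain ⟨b, rfl⟩ := intCast_surjective u
  rw [map_intCast (castHom (dvd_pow_self p (Nat.add_one_ne_zero k)) (ZMod p)), ← Int.cast_mul,
    mulPowHom_intCast, mulPowHom_intCast, Int.cast_mul, mul_assoc]

theorem castHom_mulPowHom (hk : k ≠ 0) (t : ZMod p) :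
    castHom (dvd_pow_self p (Nat.add_one_ne_zero k)) (ZMod p) (mulPowHom p k t) = 0 := by
  obtain ⟨a, rfl⟩ := intCast_surjective t
  rw [mulPowHom_intCast, map_mul, map_natCast, Nat.cast_pow, ZMod.natCast_self, zero_pow hk,
    zero_mul]

theorem mulPowHom_mul_mulPowHom (hk : k ≠ 0) (s t : ZMod p) :
    mulPowHom p k s * mulPowHom p k t = 0 := by
  rw [mulPowHom_mul, castHom_mulPowHom hk, mul_zero, map_zero]

theorem mulPowHom_injective (hp : p ≠ 0) : Injective (mulPowHom p k) := by
  refine (injective_iff_map_eq_zero _).2 fun t ht => ?_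
  obtain ⟨a, rfl⟩ := intCast_surjective t
  rw [mulPowHom_intCast, ← Int.cast_natCast, ← Int.cast_mul, intCast_zmod_eq_zero_iff_dvd,
    Nat.cast_pow, Nat.cast_pow, pow_succ] at ht
  rw [intCast_zmod_eq_zero_iff_dvd]
  exact (mul_dvd_mul_iff_left (by positivity)).1 ht

theorem exact_mulPowHom_castHom :
    Exact (mulPowHom p k) (castHom (pow_dvd_pow p (Nat.le_add_right k 1)) (ZMod (p ^ k))) := by
  intro y
  constructor
  · obtain ⟨b, rfl⟩ := intCast_surjective y
    rw [map_intCast, intCast_zmod_eq_zero_iff_dvd]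
    rintro ⟨c, rfl⟩
    exact ⟨c, by rw [mulPowHom_intCast]; push_cast; rfl⟩
  · rintro ⟨t, rfl⟩
    obtain ⟨a, rfl⟩ := intCast_surjective t
    rw [mulPowHom_intCast, map_mul, map_natCast, ZMod.natCast_self, zero_mul]

end ZMod

theorem MvPolynomial.eval_add_mulPowHom {σ : Type*} [Fintype σ] {p k : ℕ} (hk : k ≠ 0)
    (G : MvPolynomial σ (ZMod (p ^ (k + 1)))) (a : σ → ZMod (p ^ (k + 1))) (t : σ → ZMod p) :
    eval (a + ZMod.mulPowHom p k ∘ t) G = eval a G + ZMod.mulPowHom p k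
      (∑ i, t i * ZMod.castHom (dvd_pow_self p (Nat.add_one_ne_zero k)) (ZMod p)
        (eval a (pderiv i G))) := by
  rw [eval_add_of_mul_eq_zero G a (ZMod.mulPowHom p k ∘ t)
    fun i j => ZMod.mulPowHom_mul_mulPowHom hk _ _, map_sum]
  simp only [comp_apply, ZMod.mulPowHom_mul]

section Xhat

variable {N : ℕ} {F : MvPolynomial (Fin (N + 1)) ℤ} {p k : ℕ}

theorem mapsTo_Xhat_succ [NeZero p] (hk : k ≠ 0) :
    MapsTo (fun y => ZMod.castHom (pow_dvd_pow p (Nat.le_add_right k 1)) (ZMod (p ^ k)) ∘ y)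
      (Xhat N F p (k + 1)) (Xhat N F p k) := by
  rintro y ⟨⟨i, hi⟩, hy⟩
  dsimp only
  refine ⟨⟨i, by rwa [comp_apply, ZMod.dvd_val_castHom_iff (dvd_pow_self p hk)]⟩, ?_⟩
  rw [← MvPolynomial.map_eval_map_intCast, hy, map_zero]

theorem card_fiber_Xhat_succ (hp : p.Prime) (hk : k ≠ 0)
    (hsm : ∀ x : Fin (N + 1) → ZMod p, x ≠ 0 →
      eval x (MvPolynomial.map (Int.castRingHom (ZMod p)) F) = 0 →
      ∃ i, eval x (pderiv i (MvPolynomial.map (Int.castRingHom (ZMod p)) F)) ≠ 0)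
    {x : Fin (N + 1) → ZMod (p ^ k)} (hx : x ∈ Xhat N F p k) :
    Nat.card {y // y ∈ Xhat N F p (k + 1) ∧
      ZMod.castHom (pow_dvd_pow p (Nat.le_add_right k 1)) (ZMod (p ^ k)) ∘ y = x} = p ^ N := by
  have : Fact p.Prime := ⟨hp⟩
  set π := ZMod.castHom (pow_dvd_pow p (Nat.le_add_right k 1)) (ZMod (p ^ k))
  set ρ := ZMod.castHom (dvd_pow_self p (Nat.add_one_ne_zero k)) (ZMod p)
  set ε := ZMod.mulPowHom p k
  set F' := map (Int.castRingHom (ZMod (p ^ (k + 1)))) F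
  obtain ⟨a, rfl⟩ : ∃ a, π ∘ a = x := (ZMod.ringHom_surjective π).comp_left x
  obtain ⟨m, hm⟩ : ∃ m, ε m = eval a F' :=
    (ZMod.exact_mulPowHom_castHom _).1 (by rw [map_eval_map_intCast]; exact hx.2)
  set g := fun i => ρ (eval a (pderiv i F'))
  have hg : g ≠ 0 := by
    have hunit : ρ ∘ a ≠ 0 := by
      obtain ⟨i, hi⟩ := hx.1
      rw [comp_apply, ZMod.dvd_val_castHom_iff (dvd_pow_self p hk),
        ← ZMod.castHom_eq_zero_iff_dvd_val (dvd_pow_self p (Nat.add_one_ne_zero k))] at hi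
      exact fun h => hi (congrFun h i)
    have hzero : eval (ρ ∘ a) (map (Int.castRingHom (ZMod p)) F) = 0 := by
      rw [← map_eval_map_intCast, ← hm, ZMod.castHom_mulPowHom hk]
    obtain ⟨i, hi⟩ := hsm _ hunit hzero
    refine Function.ne_iff.2 ⟨i, ?_⟩
    simpa only [g, F', pderiv_map, map_eval_map_intCast, Pi.zero_apply] using hi
  have hmem (t : Fin (N + 1) → ZMod p) :
      a + ε ∘ t ∈ Xhat N F p (k + 1) ↔ m + ∑ i, t i * g i = 0 := by
    have hunit : ∃ i, ¬ p ∣ ((a + ε ∘ t) i).val := by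
      obtain ⟨i, hi⟩ := hx.1
      have hπ : π ((a + ε ∘ t) i) = π (a i) := by
        rw [Pi.add_apply, map_add, comp_apply, ZMod.exact_mulPowHom_castHom.apply_apply_eq_zero,
          add_zero]
      refine ⟨i, fun h => hi ?_⟩
      rwa [comp_apply, ← hπ, ZMod.dvd_val_castHom_iff (dvd_pow_self p hk)]
    rw [Xhat, mem_ofPred_eq, eval_add_mulPowHom hk, ← hm, ← map_add,
      map_eq_zero_iff _ (ZMod.mulPowHom_injective hp.ne_zero)]
    exact and_iff_right hunit
  rw [Exact.card_fiber_comp_eq (ZMod.mulPowHom_injective hp.ne_zero) ZMod.exact_mulPowHom_castHom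
    a (· ∈ Xhat N F p (k + 1)), Nat.card_congr (Equiv.subtypeEquivRight hmem),
    card_linear_equation_solutions hg, ZMod.card, Fintype.card_fin, Nat.add_sub_cancel]

end Xhat

theorem stmt13_general (N : ℕ) (F : MvPolynomial (Fin (N + 1)) ℤ) (p : ℕ) (hp : p.Prime)
    (hsm : ∀ x : Fin (N + 1) → ZMod p, x ≠ 0 →
      eval x (MvPolynomial.map (Int.castRingHom (ZMod p)) F) = 0 →
      ∃ i, eval x (pderiv i (MvPolynomial.map (Int.castRingHom (ZMod p)) F)) ≠ 0) :
    ∀ ℓ : ℕ, 2 ≤ ℓ →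
      Nat.card (Xhat N F p ℓ) = p ^ N * Nat.card (Xhat N F p (ℓ - 1)) := by
  intro ℓ hℓ
  obtain ⟨k, rfl⟩ : ∃ k, ℓ = k + 1 := ⟨ℓ - 1, by omega⟩
  have : NeZero p := ⟨hp.ne_zero⟩
  rw [Nat.add_sub_cancel]
  exact Nat.card_eq_mul_of_forall_card_fiber _ (mapsTo_Xhat_succ (by omega))
    fun _ hx => card_fiber_Xhat_succ hp (by omega) hsm hx

/-- Hensel-lemma counting identity for the points of the affine cone of the hypersurface
`{F = 0}` over `ℤ/p^ℓℤ` at a prime `p` where the reduction of the hypersurface is smooth: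
`#X̂(ℤ/p^ℓℤ) = p^N · #X̂(ℤ/p^{ℓ−1}ℤ)` for all `ℓ ≥ 2`. -/
theorem stmt13 (N d : ℕ) (hN : 1 ≤ N) (hd : 1 ≤ d)
    (F : MvPolynomial (Fin (N + 1)) ℤ) (hF : F.IsHomogeneous d)
    (p : ℕ) (hp : p.Prime)
    (hsm : ∀ x : Fin (N + 1) → ZMod p, x ≠ 0 →
      eval x (MvPolynomial.map (Int.castRingHom (ZMod p)) F) = 0 →
      ∃ i, eval x (pderiv i (MvPolynomial.map (Int.castRingHom (ZMod p)) F)) ≠ 0) :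
    ∀ ℓ : ℕ, 2 ≤ ℓ →
      Nat.card (Xhat N F p ℓ) = p ^ N * Nat.card (Xhat N F p (ℓ - 1)) :=
  stmt13_general N F p hp hsm
end
end
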